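/- Let k = (k₁,…,k_r) be an admissible index with r ≥ 1 and let t ∈ ℝ with |t| < 1. Then the Hurwitz-type multiple zeta series ∑_{0<n₁<⋯<n_r} ∏_{i=1}^{r} (n_i + t)^{−k_i} converges, the family (over n = (n₁,…,n_r) ∈ ℤ_{≥0}^r) with members (∏_{i=1}^{r} C(k_i+n_i−1, n_i))·ζ(k⊕n)·(−t)^{n₁+⋯+n_r} is absolutely summable, and the two sums are equal: ∑_{0<m₁<⋯<m_r} ∏_i (m_i+t)^{−k_i} = ∑_{n∈ℤ_{≥0}^r} (∏_i C(k_i+n_i−1, n_i))·ζ(k⊕n)·(−t)^{n₁+⋯+n_r}. -/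

import Mathlib

/- STATEMENT 12: for an admissible index k (r ≥ 1) and |t| < 1, the Hurwitz-type series
∑_{0<n₁<⋯<n_r} ∏ (n_i+t)^{-k_i} converges, the family
(∏ C(k_i+n_i−1,n_i)) ζ(k⊕n) (−t)^{|n|} over n ∈ ℤ_{≥0}^r is absolutely summable, and
the two sums agree. -/

noncomputable section

/-- The multiple zeta value of an index (as a `tsum`, which equals the sum of the
convergent series when the index is admissible). -/
def mzv (k : List ℕ) : ℝ :=
  ∑' n : {f : Fin k.length → ℕ // StrictMono f ∧ ∀ i, 0 < f i},
    ∏ i, ((n.1 i : ℝ) ^ k.get i)⁻¹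

/-! Each factor is expanded by the binomial series
`(m + t)^(-a) = ∑ₙ C(a+n-1, n) (-t)^n m^(-a-n)`, valid for `|t| < 1 ≤ m`. The resulting double
series over `(m, n)` converges absolutely: summing absolute values over `n` gives
`∏ (mᵢ - |t|)^(-kᵢ) ≤ (1 - |t|)^(-∑ kᵢ) ∏ mᵢ^(-kᵢ)`, and the multiple zeta series converges since,
`m_r` being the largest entry, `∏ mᵢ^(-kᵢ) ≤ ∏ mᵢ^(-(1 + 1/r))`, a product of convergent
`p`-series. Summing the double series in the other order gives the right-hand side. -/

open Finset

theorem hasSum_pi_prod {β : Type*} {r : ℕ} {f : Fin r → β → ℝ} {a : Fin r → ℝ}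
    (hf : ∀ i, HasSum (f i) (a i)) :
    HasSum (fun g : Fin r → β => ∏ i, f i (g i)) (∏ i, a i) := by
  induction r with
  | zero => simp
  | succ r ih =>
    have htail := ih fun i => hf i.succ
    have hnorm0 : Summable fun x => ‖f 0 x‖ := by
      simpa only [Real.norm_eq_abs] using (hf 0).summable.abs
    have hnorm : Summable fun g : Fin r → β => ‖∏ i : Fin r, f i.succ (g i)‖ := by
      simpa only [Real.norm_eq_abs] using htail.summable.abs
    have hsum := summable_mul_of_summable_norm (R := ℝ) hnorm0 hnorm
    have hmul := (hf 0).mul htail hsum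
    rw [Fin.prod_univ_succ, ← (Fin.consEquiv fun _ => β).hasSum_iff]
    simp only [Fin.prod_univ_succ]
    exact hmul

theorem HasSum.prod_fiberwise_right {α β γ : Type*} [AddCommMonoid α] [TopologicalSpace α]
    [ContinuousAdd α] [RegularSpace α] {f : β × γ → α} {g : γ → α} {a : α} (ha : HasSum f a)
    (hf : ∀ c, HasSum (fun b => f (b, c)) (g c)) : HasSum g a :=
  ((Equiv.prodComm γ β).hasSum_iff.2 ha).prod_fiberwise hf

def binomialTerm (a : ℕ) (t m : ℝ) (n : ℕ) : ℝ :=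
  ((a + n - 1).choose n : ℝ) * (-t) ^ n * (m ^ (a + n))⁻¹

theorem hasSum_binomialTerm {a : ℕ} (ha : 0 < a) {t m : ℝ} (htm : |t| < m) :
    HasSum (binomialTerm a t m) ((m + t) ^ a)⁻¹ := by
  have hm : 0 < m := (abs_nonneg t).trans_lt htm
  have hx : ‖-t / m‖ < 1 := by
    rwa [Real.norm_eq_abs, abs_div, abs_neg, abs_of_pos hm, div_lt_one hm]
  have h := (hasSum_choose_mul_geometric_of_norm_lt_one (a - 1) hx).mul_left (m ^ a)⁻¹
  rw [Nat.sub_add_cancel ha, one_sub_div hm.ne', sub_neg_eq_add, div_pow, one_div_div,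
    ← div_eq_inv_mul, div_div_cancel_left' (pow_ne_zero _ hm.ne')] at h
  have hterm : ∀ n, binomialTerm a t m n =
      (m ^ a)⁻¹ * (((n + (a - 1)).choose (a - 1) : ℝ) * (-t / m) ^ n) := fun n => by
    rw [binomialTerm, add_comm a n, Nat.add_sub_assoc ha, ← Nat.choose_symm_add, div_pow, pow_add]
    field_simp
  exact funext hterm ▸ h

theorem abs_binomialTerm (a : ℕ) (t : ℝ) {m : ℝ} (hm : 0 ≤ m) (n : ℕ) :
    |binomialTerm a t m n| = binomialTerm a (-|t|) m n := by
  simp [binomialTerm, abs_mul, abs_of_nonneg hm]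

theorem prod_mul_le_prod_pow {ι : Type*} [Fintype ι] {x : ι → ℝ} {K : ι → ℕ} {j : ι}
    (hx : ∀ i, 1 ≤ x i) (hK : ∀ i, 0 < K i) (hKj : 2 ≤ K j) :
    (∏ i, x i) * x j ≤ ∏ i, x i ^ K i := by
  classical
  have hsplit : (∏ i, x i) * x j = ∏ i, x i ^ (if i = j then 2 else 1) := by
    rw [← Fintype.prod_ite_eq' j x, ← prod_mul_distrib]
    refine prod_congr rfl fun i _ => ?_
    split_ifs <;> ring
  rw [hsplit]
  refine prod_le_prod (fun i _ => by positivity [(zero_le_one.trans (hx i))]) fun i _ => ?_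
  refine pow_le_pow_right₀ (hx i) ?_
  split_ifs with h
  · exact h ▸ hKj
  · exact hK i

theorem prod_rpow_le_prod_pow {ι : Type*} [Fintype ι] {x : ι → ℝ} {K : ι → ℕ} {j : ι}
    (hx : ∀ i, 1 ≤ x i) (hxj : ∀ i, x i ≤ x j) (hK : ∀ i, 0 < K i) (hKj : 2 ≤ K j) :
    ∏ i, x i ^ (1 + (Fintype.card ι : ℝ)⁻¹) ≤ ∏ i, x i ^ K i := by
  classical
  have hc : (Fintype.card ι : ℝ) ≠ 0 := by
    have : Nonempty ι := ⟨j⟩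
    exact_mod_cast Fintype.card_ne_zero
  have hx0 : ∀ i, 0 ≤ x i := fun i => zero_le_one.trans (hx i)
  calc ∏ i, x i ^ (1 + (Fintype.card ι : ℝ)⁻¹)
      = (∏ i, x i) * ∏ i, x i ^ (Fintype.card ι : ℝ)⁻¹ := by
        rw [← prod_mul_distrib]
        refine prod_congr rfl fun i _ => ?_
        rw [Real.rpow_add (zero_lt_one.trans_le (hx i)), Real.rpow_one]
    _ ≤ (∏ i, x i) * ∏ _i : ι, x j ^ (Fintype.card ι : ℝ)⁻¹ := by
        gcongr with i
        · exact prod_nonneg fun i _ => hx0 i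
        · exact fun i _ => Real.rpow_nonneg (hx0 i) _
        · exact hx0 i
        · exact hxj i
    _ = (∏ i, x i) * x j := by
        rw [prod_const, card_univ, ← Real.rpow_natCast, ← Real.rpow_mul (hx0 j),
          inv_mul_cancel₀ hc, Real.rpow_one]
    _ ≤ ∏ i, x i ^ K i := prod_mul_le_prod_pow hx hK hKj

theorem inv_pow_sub_le {m s : ℝ} (hm : 1 ≤ m) (hs₀ : 0 ≤ s) (hs₁ : s < 1) (a : ℕ) :
    ((m - s) ^ a)⁻¹ ≤ ((1 - s) ^ a)⁻¹ * (m ^ a)⁻¹ := by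
  have hpos : 0 < (1 - s) * m := mul_pos (by linarith) (by linarith)
  rw [← mul_inv, ← mul_pow]
  exact inv_anti₀ (pow_pos hpos a) (pow_le_pow_left₀ hpos.le (by nlinarith) a)

abbrev PosIncrTuple (r : ℕ) : Type := {f : Fin r → ℕ // StrictMono f ∧ ∀ i, 0 < f i}

def multipleZeta {r : ℕ} (K : Fin r → ℕ) : ℝ :=
  ∑' m : PosIncrTuple r, ∏ i, ((m.1 i : ℝ) ^ K i)⁻¹

theorem mzv_ofFn {r : ℕ} (K : Fin r → ℕ) : mzv (List.ofFn K) = multipleZeta K := by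
  have hcast : ∀ {r' : ℕ} (h : r' = r), multipleZeta (K ∘ Fin.cast h) = multipleZeta K := by
    rintro _ rfl
    rfl
  exact (congrArg multipleZeta (funext (List.get_ofFn K))).trans (hcast _)

section

variable {r : ℕ} {K : Fin r → ℕ}

theorem summable_multipleZeta (hK : ∀ i, 0 < K i) {j : Fin r} (hj : IsTop j) (hKj : 2 ≤ K j) :
    Summable fun m : PosIncrTuple r => ∏ i, ((m.1 i : ℝ) ^ K i)⁻¹ := by
  have hp : 1 < 1 + (r : ℝ)⁻¹ := lt_add_of_pos_right 1 (by have := j.pos; positivity)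
  have hdom : Summable fun g : Fin r → ℕ => ∏ i, ((g i : ℝ) ^ (1 + (r : ℝ)⁻¹))⁻¹ :=
    (hasSum_pi_prod fun _ => (Real.summable_nat_rpow_inv.mpr hp).hasSum).summable
  refine (hdom.comp_injective Subtype.val_injective).of_nonneg_of_le (fun m => by positivity)
    fun m => ?_
  have hm : ∀ i, (1 : ℝ) ≤ m.1 i := fun i => by exact_mod_cast m.2.2 i
  rw [Function.comp_apply, prod_inv_distrib, prod_inv_distrib]
  refine inv_anti₀ (prod_pos fun i _ => by positivity [hm i]) ?_
  simpa using prod_rpow_le_prod_pow hm (fun i => by exact_mod_cast m.2.1.monotone (hj i)) hK hKj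

def hurwitzTerm (K : Fin r → ℕ) (t : ℝ) (m n : Fin r → ℕ) : ℝ :=
  ∏ i, binomialTerm (K i) t (m i) (n i)

theorem hasSum_hurwitzTerm (hK : ∀ i, 0 < K i) {m : Fin r → ℕ} (hm : ∀ i, 0 < m i) {t : ℝ}
    (ht : |t| < 1) : HasSum (hurwitzTerm K t m) (∏ i, (((m i : ℝ) + t) ^ K i)⁻¹) :=
  hasSum_pi_prod fun i => hasSum_binomialTerm (hK i) (ht.trans_le (by exact_mod_cast hm i))

theorem abs_hurwitzTerm (t : ℝ) (m n : Fin r → ℕ) :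
    |hurwitzTerm K t m n| = hurwitzTerm K (-|t|) m n := by
  rw [hurwitzTerm, abs_prod]
  exact prod_congr rfl fun i _ => abs_binomialTerm _ _ (Nat.cast_nonneg _) _

theorem hurwitzTerm_eq (t : ℝ) (m n : Fin r → ℕ) :
    hurwitzTerm K t m n = (∏ i, ((K i + n i - 1).choose (n i) : ℝ)) *
      (∏ i, ((m i : ℝ) ^ (K i + n i))⁻¹) * (-t) ^ (∑ i, n i) := by
  rw [hurwitzTerm, ← prod_pow_eq_pow_sum, ← prod_mul_distrib, ← prod_mul_distrib]
  exact prod_congr rfl fun i _ => by rw [binomialTerm]; ring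

theorem hasSum_hurwitzTerm_multipleZeta (hK : ∀ i, 0 < K i) {j : Fin r} (hj : IsTop j)
    (hKj : 2 ≤ K j) (t : ℝ) (n : Fin r → ℕ) :
    HasSum (fun m : PosIncrTuple r => hurwitzTerm K t m.1 n)
      ((∏ i, ((K i + n i - 1).choose (n i) : ℝ)) * multipleZeta (fun i => K i + n i) *
        (-t) ^ (∑ i, n i)) := by
  have hzeta := (summable_multipleZeta (K := fun i => K i + n i)
    (fun i => (hK i).trans_le (Nat.le_add_right _ _)) hj (hKj.trans (Nat.le_add_right _ _))).hasSum
  simp only [hurwitzTerm_eq]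
  exact (hzeta.mul_left _).mul_right _

theorem summable_hurwitzTerm (hK : ∀ i, 0 < K i) {j : Fin r} (hj : IsTop j) (hKj : 2 ≤ K j)
    {t : ℝ} (ht : |t| < 1) :
    Summable fun p : PosIncrTuple r × (Fin r → ℕ) => hurwitzTerm K t p.1.1 p.2 := by
  have hrow (m : PosIncrTuple r) :=
    hasSum_hurwitzTerm hK m.2.2 (t := -|t|) (by rwa [abs_neg, abs_abs])
  have hm (m : PosIncrTuple r) (i : Fin r) : (1 : ℝ) ≤ m.1 i := by exact_mod_cast m.2.2 i
  have hnonneg (m : PosIncrTuple r) (i : Fin r) : 0 ≤ (((m.1 i : ℝ) - |t|) ^ K i)⁻¹ :=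
    inv_nonneg.mpr (pow_nonneg (by linarith [hm m i]) _)
  refine .of_abs <| (summable_prod_of_nonneg fun _ => abs_nonneg _).mpr ⟨fun m => ?_, ?_⟩
  · simpa only [abs_hurwitzTerm] using (hrow m).summable
  simp only [abs_hurwitzTerm, (hrow _).tsum_eq, ← sub_eq_add_neg]
  refine ((summable_multipleZeta hK hj hKj).mul_left (∏ i, ((1 - |t|) ^ K i)⁻¹)).of_nonneg_of_le
    (fun m => prod_nonneg fun i _ => hnonneg m i) fun m => ?_
  rw [← prod_mul_distrib]
  exact prod_le_prod (fun i _ => hnonneg m i) fun i _ => inv_pow_sub_le (hm m i) (abs_nonneg t) ht _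

end

theorem stmt_12 (k : List ℕ) (hpos : ∀ x ∈ k, 0 < x) (hne : k ≠ [])
    (hadm : ∀ a, k.getLast? = some a → 2 ≤ a)
    (t : ℝ) (ht : |t| < 1) :
    Summable (fun n : {f : Fin k.length → ℕ // StrictMono f ∧ ∀ i, 0 < f i} =>
      ∏ i, (((n.1 i : ℝ) + t) ^ k.get i)⁻¹) ∧
    Summable (fun n : Fin k.length → ℕ =>
      (∏ i, (Nat.choose (k.get i + n i - 1) (n i) : ℝ))
        * mzv (List.ofFn fun i => k.get i + n i) * (-t) ^ (∑ i, n i)) ∧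
    (∑' n : {f : Fin k.length → ℕ // StrictMono f ∧ ∀ i, 0 < f i},
      ∏ i, (((n.1 i : ℝ) + t) ^ k.get i)⁻¹)
    = ∑' n : Fin k.length → ℕ,
        (∏ i, (Nat.choose (k.get i + n i - 1) (n i) : ℝ))
          * mzv (List.ofFn fun i => k.get i + n i) * (-t) ^ (∑ i, n i) := by
  have hK : ∀ i, 0 < k.get i := fun i => hpos _ (k.get_mem i)
  have hlen : 0 < k.length := List.length_pos_iff.mpr hne
  let j : Fin k.length := ⟨k.length - 1, by omega⟩
  have hj : IsTop j := fun i => Fin.le_def.mpr (by simp only [j]; omega)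
  have hKj : 2 ≤ k.get j := by
    simpa [j, List.getLast_eq_getElem] using hadm _ (List.getLast?_eq_some_getLast hne)
  obtain ⟨a, ha⟩ := summable_hurwitzTerm hK hj hKj ht
  have hrows := ha.prod_fiberwise fun m => hasSum_hurwitzTerm hK m.2.2 ht
  have hcols := ha.prod_fiberwise_right fun n => hasSum_hurwitzTerm_multipleZeta hK hj hKj t n
  simp only [mzv_ofFn]
  exact ⟨hrows.summable, hcols.summable, hrows.tsum_eq.trans hcols.tsum_eq.symm⟩
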